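/- arXiv:2410.21166 — 2 statements merged into one kernel-verified Lean document; each statement's English description precedes it below -/
import Mathlib

section
/- With probability tending to 1 as n → ∞, the estimating equation ∂H_n(θ̂_{1n}, θ̂_{2n}, ρ)/∂ρ = 0 admits a solution; more precisely, there exists a sequence of random variables ρ̂_n with values in [-1,1] such that P(∂H_n(θ̂_{1n}, θ̂_{2n}, ρ̂_n)/∂ρ = 0) → 1 as n → ∞ and ρ̂_n → ρ^g in probability as n → ∞. (Theorem 1, consistency of the sequential minimum DPD estimator of the correlation.) -/
open MeasureTheory Filter Topology Set


/-- Auxiliary: derivative of a slice of a smooth function. -/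
lemma dpd_aux_slice_hasDerivAt (F : ((ℝ × ℝ) × (ℝ × ℝ)) × ℝ → ℝ)
    {U : Set (((ℝ × ℝ) × (ℝ × ℝ)) × ℝ)} (hU : IsOpen U) (hF : ContDiffOn ℝ 4 F U)
    (θp : (ℝ × ℝ) × (ℝ × ℝ)) (ρ : ℝ) (hq : (θp, ρ) ∈ U) :
    HasDerivAt (fun ρ' => F (θp, ρ'))
      (fderivWithin ℝ F U (θp, ρ) ((0 : (ℝ × ℝ) × (ℝ × ℝ)), (1 : ℝ))) ρ := by
  have hdiff : DifferentiableAt ℝ F (θp, ρ) :=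
    ((hF.contDiffAt (hU.mem_nhds hq)).differentiableAt (by norm_num))
  have hγ : HasDerivAt (fun ρ' => ((θp, ρ') : ((ℝ × ℝ) × (ℝ × ℝ)) × ℝ))
      (((0 : (ℝ × ℝ) × (ℝ × ℝ)), (1 : ℝ))) ρ :=
    (hasDerivAt_const ρ θp).prodMk (hasDerivAt_id ρ)
  have := hdiff.hasFDerivAt.comp_hasDerivAt ρ hγ
  rwa [fderivWithin_of_isOpen hU hq]

/-- Auxiliary: bound on the partial derivative in the last variable. -/
lemma dpd_aux_bound (F : ((ℝ × ℝ) × (ℝ × ℝ)) × ℝ → ℝ)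
    {U : Set (((ℝ × ℝ) × (ℝ × ℝ)) × ℝ)} (hU : IsOpen U) {q} (hq : q ∈ U) {C : ℝ}
    (hC : ‖iteratedFDerivWithin ℝ 1 F U q‖ ≤ C) :
    |fderivWithin ℝ F U q ((0 : (ℝ × ℝ) × (ℝ × ℝ)), (1 : ℝ))| ≤ C := by
  have hud : UniqueDiffWithinAt ℝ U q := hU.uniqueDiffOn q hq
  have h1 : fderivWithin ℝ F U q ((0 : (ℝ × ℝ) × (ℝ × ℝ)), (1 : ℝ)) =
      iteratedFDerivWithin ℝ 1 F U q (fun _ => ((0 : (ℝ × ℝ) × (ℝ × ℝ)), (1 : ℝ))) := by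
    rw [iteratedFDerivWithin_one_apply hud]
  rw [h1, ← Real.norm_eq_abs]
  calc ‖iteratedFDerivWithin ℝ 1 F U q (fun _ => ((0 : (ℝ × ℝ) × (ℝ × ℝ)), (1 : ℝ)))‖
      ≤ ‖iteratedFDerivWithin ℝ 1 F U q‖ * ∏ _i : Fin 1, ‖((0 : (ℝ × ℝ) × (ℝ × ℝ)), (1 : ℝ))‖ :=
        (iteratedFDerivWithin ℝ 1 F U q).le_opNorm _
    _ ≤ C := by
        simp [Prod.norm_def]
        exact hC

/-- Measurability in the data variable of the partial derivative in the last parameter. -/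
lemma dpd_aux_meas (F : ℝ × ℝ → ((ℝ × ℝ) × (ℝ × ℝ)) × ℝ → ℝ)
    {U : Set (((ℝ × ℝ) × (ℝ × ℝ)) × ℝ)} (hU : IsOpen U)
    (hF : ∀ x, ContDiffOn ℝ 4 (F x) U)
    (hFmeas : ∀ q, Measurable (fun x => F x q))
    {Q : ((ℝ × ℝ) × (ℝ × ℝ)) × ℝ} {ε₀ : ℝ} (hball : Metric.ball Q ε₀ ⊆ U)
    {q₀ : ((ℝ × ℝ) × (ℝ × ℝ)) × ℝ} (hq₀ : q₀ ∈ Metric.ball Q ε₀) :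
    Measurable (fun x => fderivWithin ℝ (F x) U q₀ ((0 : (ℝ × ℝ) × (ℝ × ℝ)), (1 : ℝ))) := by
  have hq₀U : q₀ ∈ U := hball hq₀
  set r : ℝ := (ε₀ - dist q₀ Q) / 2 with hr
  have hrpos : 0 < r := by
    have := Metric.mem_ball.mp hq₀
    simp only [hr]
    linarith
  set t : ℕ → ℝ := fun m => r / (m + 1) with ht
  have htpos : ∀ m, 0 < t m := fun m => by positivity
  have htlim : Tendsto t atTop (𝓝 0) := by
    have h1 : Tendsto (fun m : ℕ => 1 / ((m : ℝ) + 1)) atTop (𝓝 0) :=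
      tendsto_one_div_add_atTop_nhds_zero_nat
    have := h1.const_mul r
    simpa [ht, div_eq_mul_inv, mul_comm, mul_zero, one_div] using this
  have hseq : Tendsto (fun m => q₀.2 + t m) atTop (𝓝[≠] q₀.2) := by
    refine tendsto_nhdsWithin_of_tendsto_nhds_of_eventually_within _ ?_ ?_
    · simpa using tendsto_const_nhds.add htlim
    · exact Eventually.of_forall fun m => by
        simp only [mem_compl_iff, mem_singleton_iff]
        have := htpos m; intro h; nlinarith [add_left_cancel (a := q₀.2) (b := t m) (c := 0)]
  have hmem : ∀ m, ((q₀.1, q₀.2 + t m) : ((ℝ × ℝ) × (ℝ × ℝ)) × ℝ) ∈ U := by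
    intro m
    apply hball
    rw [Metric.mem_ball, Prod.dist_eq]
    have h1 : dist q₀.1 Q.1 ≤ dist q₀ Q := by rw [Prod.dist_eq]; exact le_max_left _ _
    have h2 : dist q₀.2 Q.2 ≤ dist q₀ Q := by rw [Prod.dist_eq]; exact le_max_right _ _
    have h3 : dist (q₀.2 + t m) Q.2 ≤ |t m| + dist q₀.2 Q.2 := by
      calc dist (q₀.2 + t m) Q.2 ≤ dist (q₀.2 + t m) q₀.2 + dist q₀.2 Q.2 := dist_triangle _ _ _
        _ = |t m| + dist q₀.2 Q.2 := by rw [Real.dist_eq]; ring_nf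
    have h4 : |t m| ≤ r := by
      rw [abs_of_pos (htpos m)]
      rw [ht]
      rw [div_le_iff₀ (by positivity)]
      nlinarith [htpos m]
    have hq := Metric.mem_ball.mp hq₀
    have : dist (q₀.2 + t m) Q.2 < ε₀ := by
      have : r + dist q₀ Q < ε₀ := by simp only [hr]; linarith
      linarith [h3, h4, h2]
    exact max_lt (lt_of_le_of_lt h1 (Metric.mem_ball.mp hq₀)) this
  apply measurable_of_tendsto_metrizable
    (f := fun m x => (F x (q₀.1, q₀.2 + t m) - F x q₀) / t m)
  · intro m
    exact ((hFmeas _).sub (hFmeas _)).div_const _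
  · rw [tendsto_pi_nhds]
    intro x
    have hDA : HasDerivAt (fun ρ' => F x (q₀.1, ρ'))
        (fderivWithin ℝ (F x) U q₀ ((0 : (ℝ × ℝ) × (ℝ × ℝ)), (1 : ℝ))) q₀.2 := by
      have := dpd_aux_slice_hasDerivAt (F x) hU (hF x) q₀.1 q₀.2 (by simpa using hq₀U)
      simpa using this
    have hslope := (hasDerivAt_iff_tendsto_slope.mp hDA).comp hseq
    have hfun : (slope (fun ρ' => F x (q₀.1, ρ')) q₀.2 ∘ fun m => q₀.2 + t m)
        = fun m => (F x (q₀.1, q₀.2 + t m) - F x q₀) / t m := by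
      funext m
      simp only [Function.comp_apply, slope_def_field, add_sub_cancel_left]
    rwa [hfun] at hslope

lemma dpd_aux_hasDerivAt_integral
    {Ω : Type*} [MeasurableSpace Ω] (ℙ : Measure Ω) [IsProbabilityMeasure ℙ]
    (F : ℝ × ℝ → ((ℝ × ℝ) × (ℝ × ℝ)) × ℝ → ℝ)
    {U : Set (((ℝ × ℝ) × (ℝ × ℝ)) × ℝ)} (hU : IsOpen U)
    (hF : ∀ x, ContDiffOn ℝ 4 (F x) U)
    (hFmeas : ∀ q, Measurable (fun x => F x q))
    (X0 : Ω → ℝ × ℝ) (hX0 : Measurable X0)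
    (M : ℝ × ℝ → ℝ) (hMint : Integrable (fun ω => M (X0 ω)) ℙ)
    (hbd0 : ∀ x, ∀ q ∈ U, |F x q| ≤ M x)
    (hbd1 : ∀ x, ∀ q ∈ U, |fderivWithin ℝ (F x) U q ((0 : (ℝ × ℝ) × (ℝ × ℝ)), (1 : ℝ))| ≤ M x)
    {Q : ((ℝ × ℝ) × (ℝ × ℝ)) × ℝ} {ε₀ : ℝ} (hball : Metric.ball Q ε₀ ⊆ U)
    (θp : (ℝ × ℝ) × (ℝ × ℝ)) (ρ₀ : ℝ)
    (hq₀ : ((θp, ρ₀) : ((ℝ × ℝ) × (ℝ × ℝ)) × ℝ) ∈ Metric.ball Q ε₀) :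
    Integrable (fun ω => fderivWithin ℝ (F (X0 ω)) U (θp, ρ₀)
      ((0 : (ℝ × ℝ) × (ℝ × ℝ)), (1 : ℝ))) ℙ ∧
    HasDerivAt (fun ρ => ∫ ω, F (X0 ω) (θp, ρ) ∂ℙ)
      (∫ ω, fderivWithin ℝ (F (X0 ω)) U (θp, ρ₀) ((0 : (ℝ × ℝ) × (ℝ × ℝ)), (1 : ℝ)) ∂ℙ) ρ₀ := by
  set ε' : ℝ := ε₀ - dist ((θp, ρ₀) : ((ℝ × ℝ) × (ℝ × ℝ)) × ℝ) Q with hε'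
  have hε'pos : 0 < ε' := by
    have := Metric.mem_ball.mp hq₀; simp only [hε']; linarith
  have hmem : ∀ ρ ∈ Metric.ball ρ₀ ε', ((θp, ρ) : ((ℝ × ℝ) × (ℝ × ℝ)) × ℝ) ∈ U := by
    intro ρ hρ
    apply hball
    rw [Metric.mem_ball, Prod.dist_eq]
    have h1 : dist θp Q.1 ≤ dist ((θp, ρ₀) : ((ℝ × ℝ) × (ℝ × ℝ)) × ℝ) Q := by
      rw [Prod.dist_eq]; exact le_max_left _ _
    have h2 : dist ρ₀ Q.2 ≤ dist ((θp, ρ₀) : ((ℝ × ℝ) × (ℝ × ℝ)) × ℝ) Q := by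
      rw [Prod.dist_eq]; exact le_max_right _ _
    have h3 : dist ρ Q.2 ≤ dist ρ ρ₀ + dist ρ₀ Q.2 := dist_triangle _ _ _
    have h4 : dist ρ ρ₀ < ε' := Metric.mem_ball.mp hρ
    have hq := Metric.mem_ball.mp hq₀
    refine max_lt (lt_of_le_of_lt h1 hq) ?_
    simp only [hε'] at h4
    simp only []
    calc dist ρ Q.2 ≤ dist ρ ρ₀ + dist ρ₀ Q.2 := h3
      _ < ε₀ := by linarith
  have hsliceDA : ∀ x, ∀ ρ ∈ Metric.ball ρ₀ ε', HasDerivAt (fun ρ' => F x (θp, ρ'))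
      (fderivWithin ℝ (F x) U (θp, ρ) ((0 : (ℝ × ℝ) × (ℝ × ℝ)), (1 : ℝ))) ρ :=
    fun x ρ hρ => dpd_aux_slice_hasDerivAt (F x) hU (hF x) θp ρ (hmem ρ hρ)
  have key := hasDerivAt_integral_of_dominated_loc_of_lip (μ := ℙ)
    (F := fun ρ ω => F (X0 ω) (θp, ρ))
    (F' := fun ω => fderivWithin ℝ (F (X0 ω)) U (θp, ρ₀) ((0 : (ℝ × ℝ) × (ℝ × ℝ)), (1 : ℝ)))
    (x₀ := ρ₀) (bound := fun ω => M (X0 ω)) (Metric.ball_mem_nhds ρ₀ hε'pos)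
    (Eventually.of_forall fun ρ => ((hFmeas (θp, ρ)).comp hX0).aestronglyMeasurable)
    ?_ ?_ ?_ hMint ?_
  · exact key
  · -- integrability at ρ₀
    refine Integrable.mono' hMint ((hFmeas (θp, ρ₀)).comp hX0).aestronglyMeasurable ?_
    exact Eventually.of_forall fun ω => by
      rw [Real.norm_eq_abs]
      exact hbd0 (X0 ω) _ (hmem ρ₀ (Metric.mem_ball_self hε'pos))
  · exact ((dpd_aux_meas F hU hF hFmeas hball hq₀).comp hX0).aestronglyMeasurable
  · refine Eventually.of_forall fun ω => ?_
    refine Convex.lipschitzOnWith_of_nnnorm_hasDerivWithin_le (convex_ball _ _)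
      (f' := fun ρ => fderivWithin ℝ (F (X0 ω)) U (θp, ρ) ((0 : (ℝ × ℝ) × (ℝ × ℝ)), (1 : ℝ)))
      (fun ρ hρ => (hsliceDA (X0 ω) ρ hρ).hasDerivWithinAt) ?_
    intro ρ hρ
    rw [← NNReal.coe_le_coe, coe_nnnorm, Real.coe_nnabs, Real.norm_eq_abs]
    exact le_trans (hbd1 (X0 ω) _ (hmem ρ hρ)) (le_abs_self _)
  · exact Eventually.of_forall fun ω =>
      hsliceDA (X0 ω) ρ₀ (Metric.mem_ball_self hε'pos)

/-- If a.e. every `ω` is eventually in `B n`, then `ℙ (B n)ᶜ → 0`. -/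
lemma dpd_aux_prob_compl_tendsto_zero {Ω : Type*} [MeasurableSpace Ω] (ℙ : Measure Ω)
    [IsProbabilityMeasure ℙ] {B : ℕ → Set Ω} (hmeas : ∀ n, MeasurableSet (B n))
    (h : ∀ᵐ ω ∂ℙ, ∀ᶠ n in atTop, ω ∈ B n) :
    Tendsto (fun n => ℙ (B n)ᶜ) atTop (𝓝 0) := by
  set D : ℕ → Set Ω := fun n => ⋃ k, ⋃ (_ : n ≤ k), (B k)ᶜ with hD
  have hDmeas : ∀ n, MeasurableSet (D n) := fun n =>
    MeasurableSet.iUnion fun k => MeasurableSet.iUnion fun _ => (hmeas k).compl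
  have hanti : Antitone D := by
    intro a b hab
    refine iUnion₂_subset fun k hk => ?_
    exact subset_iUnion₂ (s := fun k _ => (B k)ᶜ) k (hab.trans hk)
  have hiInter : ℙ (⋂ n, D n) = 0 := by
    refine measure_mono_null ?_ (ae_iff.mp h)
    intro ω hω hcon
    simp only [mem_setOf_eq, eventually_atTop] at hcon
    obtain ⟨N, hN⟩ := hcon
    have hωN := mem_iInter.mp hω N
    simp only [hD, mem_iUnion] at hωN
    obtain ⟨k, hk, hωk⟩ := hωN
    exact hωk (hN k hk)
  have htend : Tendsto (fun n => ℙ (D n)) atTop (𝓝 0) := by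
    have := tendsto_measure_iInter_atTop (μ := ℙ)
      (fun n => (hDmeas n).nullMeasurableSet) hanti ⟨0, measure_ne_top ℙ _⟩
    rwa [hiInter] at this
  refine tendsto_of_tendsto_of_tendsto_of_le_of_le tendsto_const_nhds htend
    (fun n => zero_le) (fun n => measure_mono ?_)
  intro ω hω
  simp only [hD, mem_iUnion]
  exact ⟨n, le_rfl, hω⟩

/-- Strong law of large numbers for a measurable function of i.i.d. data. -/
lemma dpd_aux_lln {Ω : Type*} [MeasurableSpace Ω] (ℙ : Measure Ω) [IsProbabilityMeasure ℙ]
    (X : ℕ → Ω → ℝ × ℝ) (hXmeas : ∀ i, Measurable (X i))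
    (hXindep : ProbabilityTheory.iIndepFun X ℙ)
    (hXident : ∀ i, Measure.map (X i) ℙ = Measure.map (X 0) ℙ)
    (ψ : ℝ × ℝ → ℝ) (hψ : Measurable ψ) (hint : Integrable (fun ω => ψ (X 0 ω)) ℙ) :
    ∀ᵐ ω ∂ℙ, Tendsto (fun n : ℕ => (n : ℝ)⁻¹ * ∑ i ∈ Finset.range n, ψ (X i ω)) atTop
      (𝓝 (∫ ω, ψ (X 0 ω) ∂ℙ)) := by
  have hind : Pairwise (Function.onFun (ProbabilityTheory.IndepFun · · ℙ) (fun i ω => ψ (X i ω))) := by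
    intro i j hij
    exact (hXindep.indepFun hij).comp hψ hψ
  have hid : ∀ i, ProbabilityTheory.IdentDistrib (fun ω => ψ (X i ω)) (fun ω => ψ (X 0 ω)) ℙ ℙ := by
    intro i
    exact (⟨(hXmeas i).aemeasurable, (hXmeas 0).aemeasurable, hXident i⟩ :
      ProbabilityTheory.IdentDistrib (X i) (X 0) ℙ ℙ).comp hψ
  have := ProbabilityTheory.strong_law_ae_real (fun i ω => ψ (X i ω)) hint hind hid
  filter_upwards [this] with ω hω
  simpa [div_eq_inv_mul] using hω
noncomputable def dpdV (β : ℝ) (f : ℝ × ℝ → (ℝ × ℝ) → (ℝ × ℝ) → ℝ → ℝ)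
    (x : ℝ × ℝ) (θ₁ θ₂ : ℝ × ℝ) (ρ : ℝ) : ℝ :=
  (∫ u : ℝ × ℝ, f u θ₁ θ₂ ρ ^ (1 + β)) - (1 + 1 / β) * f x θ₁ θ₂ ρ ^ β

/-- The empirical DPD objective `H_n(θ₁,θ₂,ρ) = (1/n) Σ_{i<n} V(X_i; θ₁,θ₂,ρ)`. -/
noncomputable def dpdHn {Ω : Type*} (β : ℝ) (f : ℝ × ℝ → (ℝ × ℝ) → (ℝ × ℝ) → ℝ → ℝ)
    (X : ℕ → Ω → ℝ × ℝ) (n : ℕ) (θ₁ θ₂ : ℝ × ℝ) (ρ : ℝ) (ω : Ω) : ℝ :=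
  (n : ℝ)⁻¹ * ∑ i ∈ Finset.range n, dpdV β f (X i ω) θ₁ θ₂ ρ

/-- **Consistency of the sequential minimum DPD estimator of the correlation** (Theorem 1).
Given i.i.d. bivariate data with true density `g` (distribution `ℙ ∘ X₀⁻¹`), a model family of
joint densities `f(·;θ₁,θ₂,ρ)`, consistent estimator sequences `θ̂_{1n}, θ̂_{2n}` of the
best-fitting marginal parameters, and the regularity conditions (Assumptions 1–5: four-fold
smoothness of the parametrization on a neighborhood `U` of the truth, differentiation under the
integral sign, and integrable domination of the derivatives up to fourth order), and assuming
`ρ^g ∈ (−1,1)` is the unique minimizer of the population objective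
`ρ ↦ H(θ₁^g,θ₂^g,ρ)` over `[−1,1]`, an interior critical point with positive second derivative,
there exists a sequence of `[−1,1]`-valued random variables `ρ̂_n` such that
`P(∂H_n(θ̂_{1n},θ̂_{2n},ρ)/∂ρ |_{ρ = ρ̂_n} = 0) → 1` and `ρ̂_n → ρ^g` in probability. -/
theorem smdpde_correlation_consistency
    {Ω : Type*} [MeasurableSpace Ω] (ℙ : Measure Ω) [IsProbabilityMeasure ℙ]
    (β : ℝ) (hβ : 0 < β)
    -- the i.i.d. data
    (X : ℕ → Ω → ℝ × ℝ) (hXmeas : ∀ i, Measurable (X i))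
    (hXindep : ProbabilityTheory.iIndepFun X ℙ)
    (hXident : ∀ i, Measure.map (X i) ℙ = Measure.map (X 0) ℙ)
    -- the model family of joint densities
    (f : ℝ × ℝ → (ℝ × ℝ) → (ℝ × ℝ) → ℝ → ℝ)
    (hfmeas : ∀ θ₁ θ₂ ρ, Measurable fun x => f x θ₁ θ₂ ρ)
    (hfnonneg : ∀ x θ₁ θ₂ ρ, 0 ≤ f x θ₁ θ₂ ρ)
    (hfdens : ∀ θ₁ θ₂ : ℝ × ℝ, 0 < θ₁.2 → 0 < θ₂.2 → ∀ ρ ∈ Icc (-1 : ℝ) 1,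
      ∫ x : ℝ × ℝ, f x θ₁ θ₂ ρ = 1)
    -- best-fitting parameter values
    (θ1g θ2g : ℝ × ℝ) (hθ1g : 0 < θ1g.2) (hθ2g : 0 < θ2g.2)
    (ρg : ℝ) (hρg : ρg ∈ Ioo (-1 : ℝ) 1)
    -- ρ^g is the unique minimizer of the population objective, an interior critical point
    -- with positive second derivative
    (hmin : ∀ ρ ∈ Icc (-1 : ℝ) 1, ρ ≠ ρg →
      (∫ ω, dpdV β f (X 0 ω) θ1g θ2g ρg ∂ℙ) < ∫ ω, dpdV β f (X 0 ω) θ1g θ2g ρ ∂ℙ)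
    (hcrit : deriv (fun ρ => ∫ ω, dpdV β f (X 0 ω) θ1g θ2g ρ ∂ℙ) ρg = 0)
    (hsecond : 0 < deriv (deriv (fun ρ => ∫ ω, dpdV β f (X 0 ω) θ1g θ2g ρ ∂ℙ)) ρg)
    -- the given consistent marginal estimators
    (θ1hat θ2hat : ℕ → Ω → ℝ × ℝ)
    (hθhatmeas : ∀ n, Measurable (θ1hat n) ∧ Measurable (θ2hat n))
    (hθ1hat : ∀ ε > (0 : ℝ),
      Tendsto (fun n => ℙ {ω | ε < dist (θ1hat n ω) θ1g}) atTop (𝓝 0))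
    (hθ2hat : ∀ ε > (0 : ℝ),
      Tendsto (fun n => ℙ {ω | ε < dist (θ2hat n ω) θ2g}) atTop (𝓝 0))
    -- regularity (Assumptions 1–5) on a neighborhood `U` of the truth
    (U : Set (((ℝ × ℝ) × (ℝ × ℝ)) × ℝ)) (hU : IsOpen U) (hUmem : ((θ1g, θ2g), ρg) ∈ U)
    (hsmooth : ∀ x, ContDiffOn ℝ 4
      (fun q : ((ℝ × ℝ) × (ℝ × ℝ)) × ℝ => dpdV β f x q.1.1 q.1.2 q.2) U)
    (hsmoothInt : ContDiffOn ℝ 4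
      (fun q : ((ℝ × ℝ) × (ℝ × ℝ)) × ℝ => ∫ u : ℝ × ℝ, f u q.1.1 q.1.2 q.2 ^ (1 + β)) U)
    (hsmoothPop : ContDiffOn ℝ 4
      (fun q : ((ℝ × ℝ) × (ℝ × ℝ)) × ℝ => ∫ ω, dpdV β f (X 0 ω) q.1.1 q.1.2 q.2 ∂ℙ) U)
    (hDUI : ∀ q ∈ U,
      -- differentiation under the integral sign for the population objective
      HasFDerivAt (fun q' : ((ℝ × ℝ) × (ℝ × ℝ)) × ℝ =>
          ∫ ω, dpdV β f (X 0 ω) q'.1.1 q'.1.2 q'.2 ∂ℙ)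
        (∫ ω, fderivWithin ℝ
          (fun q' : ((ℝ × ℝ) × (ℝ × ℝ)) × ℝ => dpdV β f (X 0 ω) q'.1.1 q'.1.2 q'.2) U q ∂ℙ) q)
    (hdom : ∃ M : ℝ × ℝ → ℝ, Integrable (fun ω => M (X 0 ω)) ℙ ∧
      ∀ x, ∀ q ∈ U, ∀ k : ℕ, k ≤ 4 →
        ‖iteratedFDerivWithin ℝ k
          (fun q' : ((ℝ × ℝ) × (ℝ × ℝ)) × ℝ => dpdV β f x q'.1.1 q'.1.2 q'.2) U q‖ ≤ M x) :
    -- conclusion: w.p. → 1 the estimating equation has a root ρ̂_n, consistent for ρ^g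
    ∃ ρhat : ℕ → Ω → ℝ,
      (∀ n ω, ρhat n ω ∈ Icc (-1 : ℝ) 1) ∧
      Tendsto (fun n => ℙ {ω |
          deriv (fun ρ => dpdHn β f X n (θ1hat n ω) (θ2hat n ω) ρ ω) (ρhat n ω) = 0})
        atTop (𝓝 1) ∧
      (∀ ε > (0 : ℝ), Tendsto (fun n => ℙ {ω | ε < |ρhat n ω - ρg|}) atTop (𝓝 0)) := by  classical
  obtain ⟨M, hMint, hMbound⟩ := hdom
  set P : ℝ × ℝ → ((ℝ × ℝ) × (ℝ × ℝ)) × ℝ → ℝ := fun x q =>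
    fderivWithin ℝ (fun q' => dpdV β f x q'.1.1 q'.1.2 q'.2) U q
      ((0 : (ℝ × ℝ) × (ℝ × ℝ)), (1 : ℝ)) with hPdef
  set Q : ((ℝ × ℝ) × (ℝ × ℝ)) × ℝ := ((θ1g, θ2g), ρg) with hQdef
  have hM0 : ∀ x, 0 ≤ M x := fun x =>
    le_trans (norm_nonneg _) (hMbound x Q hUmem 0 (by norm_num))
  have hbd0 : ∀ x, ∀ q ∈ U, |dpdV β f x q.1.1 q.1.2 q.2| ≤ M x := by
    intro x q hq
    have := hMbound x q hq 0 (by norm_num)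
    rwa [norm_iteratedFDerivWithin_zero, Real.norm_eq_abs] at this
  have hbd1 : ∀ x, ∀ q ∈ U, |P x q| ≤ M x := fun x q hq =>
    dpd_aux_bound _ hU hq (hMbound x q hq 1 (by norm_num))
  have hVmeas : ∀ θ₁ θ₂ ρ, Measurable (fun x => dpdV β f x θ₁ θ₂ ρ) := by
    intro θ₁ θ₂ ρ
    unfold dpdV
    exact measurable_const.sub
      (((Real.continuous_rpow_const hβ.le).measurable.comp (hfmeas θ₁ θ₂ ρ)).const_mul _)
  have hFmeas : ∀ q : ((ℝ × ℝ) × (ℝ × ℝ)) × ℝ,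
      Measurable (fun x => dpdV β f x q.1.1 q.1.2 q.2) := fun q => hVmeas _ _ _
  obtain ⟨ε₀, hε₀pos, hball⟩ := Metric.isOpen_iff.mp hU Q hUmem
  have hPmeas : ∀ q₀ ∈ Metric.ball Q ε₀, Measurable (fun x => P x q₀) := fun q₀ hq₀ =>
    dpd_aux_meas _ hU hsmooth hFmeas hball hq₀
  have hPcont : ∀ x, ContinuousOn (fun q => P x q) U := by
    intro x
    exact ((hsmooth x).continuousOn_fderivWithin hU.uniqueDiffOn (by norm_num)).clm_apply
      continuousOn_const
  have hL1 : ∀ (x : ℝ × ℝ) (θ₁ θ₂ : ℝ × ℝ) (ρ : ℝ),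
      ((((θ₁, θ₂), ρ)) : ((ℝ × ℝ) × (ℝ × ℝ)) × ℝ) ∈ U →
      HasDerivAt (fun ρ' => dpdV β f x θ₁ θ₂ ρ') (P x ((θ₁, θ₂), ρ)) ρ :=
    fun x θ₁ θ₂ ρ hq => dpd_aux_slice_hasDerivAt _ hU (hsmooth x) (θ₁, θ₂) ρ hq
  have hQmem : ∀ (θp : (ℝ × ℝ) × (ℝ × ℝ)) (ρ : ℝ), dist θp (θ1g, θ2g) ≤ ε₀ / 2 →
      |ρ - ρg| ≤ ε₀ / 2 → ((θp, ρ) : ((ℝ × ℝ) × (ℝ × ℝ)) × ℝ) ∈ Metric.ball Q ε₀ := by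
    intro θp ρ h1 h2
    rw [Metric.mem_ball, hQdef, Prod.dist_eq]
    refine max_lt (lt_of_le_of_lt h1 (by linarith)) ?_
    simp only []
    rw [Real.dist_eq]
    linarith
  -- the population objective restricted to ρ
  set h : ℝ → ℝ := fun ρ => ∫ ω, dpdV β f (X 0 ω) θ1g θ2g ρ ∂ℙ with hhdef
  have hkey : ∀ ρ₀ : ℝ, ((((θ1g, θ2g), ρ₀)) : ((ℝ × ℝ) × (ℝ × ℝ)) × ℝ) ∈ Metric.ball Q ε₀ →
      Integrable (fun ω => P (X 0 ω) ((θ1g, θ2g), ρ₀)) ℙ ∧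
      HasDerivAt h (∫ ω, P (X 0 ω) ((θ1g, θ2g), ρ₀) ∂ℙ) ρ₀ := by
    intro ρ₀ hmem
    exact dpd_aux_hasDerivAt_integral ℙ (fun x q => dpdV β f x q.1.1 q.1.2 q.2) hU hsmooth
      hFmeas (X 0) (hXmeas 0) M hMint hbd0 hbd1 hball (θ1g, θ2g) ρ₀ hmem
  -- smoothness of h near ρg
  set I₀ : Set ℝ := (fun ρ => (((θ1g, θ2g), ρ) : ((ℝ × ℝ) × (ℝ × ℝ)) × ℝ)) ⁻¹' U with hI₀def
  have hI₀open : IsOpen I₀ := hU.preimage (continuous_const.prodMk continuous_id)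
  have hρgI₀ : ρg ∈ I₀ := by
    simp only [hI₀def, mem_preimage]
    exact hUmem
  have hh4 : ContDiffOn ℝ 4 h I₀ := by
    have := hsmoothPop.comp ((contDiff_const.prodMk contDiff_id).contDiffOn
      (s := I₀)) (fun ρ hρ => hρ)
    exact this
  have hh3 : ContDiffOn ℝ 3 (deriv h) I₀ := hh4.deriv_of_isOpen hI₀open (by norm_num)
  have hh2 : ContDiffOn ℝ 2 (deriv (deriv h)) I₀ := hh3.deriv_of_isOpen hI₀open (by norm_num)
  -- choose the scale δ
  have hcontdd : ContinuousAt (deriv (deriv h)) ρg :=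
    (hh2.continuousOn.continuousAt (hI₀open.mem_nhds hρgI₀))
  have hev : ∀ᶠ x in 𝓝 ρg, 0 < deriv (deriv h) x := hcontdd (Ioi_mem_nhds hsecond)
  obtain ⟨r₁, hr₁pos, hr₁⟩ := Metric.eventually_nhds_iff.mp hev
  obtain ⟨r₂, hr₂pos, hr₂⟩ := Metric.mem_nhds_iff.mp (hI₀open.mem_nhds hρgI₀)
  have h1ρg : (0:ℝ) < 1 - ρg := by linarith [hρg.2]
  have h2ρg : (0:ℝ) < ρg + 1 := by linarith [hρg.1]
  set δ : ℝ := min (min (r₁ / 2) (r₂ / 2)) (min (ε₀ / 2) (min (1 - ρg) (ρg + 1) / 2)) with hδdef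
  have hδpos : 0 < δ := by
    apply lt_min (lt_min (by linarith) (by linarith))
    apply lt_min (by linarith)
    simp only [lt_div_iff₀ (by norm_num : (0:ℝ) < 2)]
    rcases le_total (1 - ρg) (ρg + 1) with hc | hc
    · rw [min_eq_left hc]; linarith
    · rw [min_eq_right hc]; linarith
  have hδr₁ : δ < r₁ := lt_of_le_of_lt (le_trans (min_le_left _ _) (min_le_left _ _)) (by linarith)
  have hδr₂ : δ < r₂ := lt_of_le_of_lt (le_trans (min_le_left _ _) (min_le_right _ _)) (by linarith)
  have hδε₀ : δ ≤ ε₀ / 2 := le_trans (min_le_right _ _) (min_le_left _ _)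
  have hδIoo : ∀ ρ : ℝ, |ρ - ρg| ≤ δ → ρ ∈ Ioo (-1 : ℝ) 1 := by
    intro ρ hρ
    have hδ1 : δ ≤ min (1 - ρg) (ρg + 1) / 2 := le_trans (min_le_right _ _) (min_le_right _ _)
    have hm1 : min (1 - ρg) (ρg + 1) ≤ 1 - ρg := min_le_left _ _
    have hm2 : min (1 - ρg) (ρg + 1) ≤ ρg + 1 := min_le_right _ _
    rw [abs_le] at hρ
    constructor <;> nlinarith [hρ.1, hρ.2]
  have hδI₀ : ∀ ρ : ℝ, |ρ - ρg| ≤ δ → ρ ∈ I₀ := by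
    intro ρ hρ
    apply hr₂
    rw [Metric.mem_ball, Real.dist_eq]
    linarith
  have hmono : StrictMonoOn (deriv h) (Icc (ρg - δ) (ρg + δ)) := by
    refine strictMonoOn_of_deriv_pos (convex_Icc _ _) (hh3.continuousOn.mono ?_) ?_
    · intro ρ hρ
      apply hδI₀
      rw [abs_le]
      exact ⟨by linarith [hρ.1], by linarith [hρ.2]⟩
    · intro ρ hρ
      rw [interior_Icc] at hρ
      apply hr₁
      rw [Real.dist_eq, abs_lt]
      exact ⟨by linarith [hρ.1, hδr₁], by linarith [hρ.2, hδr₁]⟩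
  have hsign : ∀ δ' : ℝ, 0 < δ' → δ' ≤ δ →
      deriv h (ρg - δ') < 0 ∧ 0 < deriv h (ρg + δ') := by
    intro δ' h1 h2
    have hmem1 : ρg - δ' ∈ Icc (ρg - δ) (ρg + δ) := ⟨by linarith, by linarith⟩
    have hmem2 : ρg ∈ Icc (ρg - δ) (ρg + δ) := ⟨by linarith, by linarith⟩
    have hmem3 : ρg + δ' ∈ Icc (ρg - δ) (ρg + δ) := ⟨by linarith, by linarith⟩
    constructor
    · have := hmono hmem1 hmem2 (by linarith)
      rwa [hcrit] at this
    · have := hmono hmem2 hmem3 (by linarith)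
      rwa [hcrit] at this
  -- dense sequence in the marginal-parameter space
  set d : ℕ → (ℝ × ℝ) × (ℝ × ℝ) := TopologicalSpace.denseSeq ((ℝ × ℝ) × (ℝ × ℝ)) with hddef
  have hd : DenseRange d := TopologicalSpace.denseRange_denseSeq _
  set τ : ℕ → ℝ := fun m => min ((m : ℝ) + 1)⁻¹ (ε₀ / 2) with hτdef
  have hτpos : ∀ m, 0 < τ m := fun m => lt_min (by positivity) (by linarith)
  have hτle : ∀ m, τ m ≤ ε₀ / 2 := fun m => min_le_right _ _
  -- core concentration estimate at a fixed ρ₀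
  have core : ∀ ρ₀ : ℝ, |ρ₀ - ρg| ≤ ε₀ / 2 → ∀ c : ℝ, 0 < c → ∃ En : ℕ → Set Ω,
      (∀ n, MeasurableSet (En n)) ∧ Tendsto (fun n => ℙ (En n)ᶜ) atTop (𝓝 0) ∧
      ∀ n : ℕ, ∀ ω ∈ En n,
        (dist (θ1hat n ω) θ1g < ε₀ / 2 ∧ dist (θ2hat n ω) θ2g < ε₀ / 2) ∧
        |(n : ℝ)⁻¹ * ∑ i ∈ Finset.range n, P (X i ω) ((θ1hat n ω, θ2hat n ω), ρ₀)
          - deriv h ρ₀| < c := by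
    intro ρ₀ hρ₀ c hc
    have hq₀ball : ((((θ1g, θ2g), ρ₀)) : ((ℝ × ℝ) × (ℝ × ℝ)) × ℝ) ∈ Metric.ball Q ε₀ :=
      hQmem (θ1g, θ2g) ρ₀ (by simp [dist_self]; positivity) hρ₀
    obtain ⟨hψint, hψDA⟩ := hkey ρ₀ hq₀ball
    have hψm : Measurable (fun x => P x ((θ1g, θ2g), ρ₀)) := hPmeas _ hq₀ball
    have hEψ : deriv h ρ₀ = ∫ ω, P (X 0 ω) ((θ1g, θ2g), ρ₀) ∂ℙ := hψDA.deriv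
    -- the continuity-modulus envelope
    set gfun : ℕ → ℕ → ℝ × ℝ → ℝ := fun m j x =>
      if d j ∈ Metric.ball ((θ1g, θ2g) : (ℝ × ℝ) × (ℝ × ℝ)) (τ m)
        then |P x ((d j), ρ₀) - P x ((θ1g, θ2g), ρ₀)| else 0 with hgdef
    set W : ℕ → ℝ × ℝ → ℝ := fun m x => ⨆ j : ℕ, gfun m j x with hWdef
    have hdjball : ∀ m j, d j ∈ Metric.ball ((θ1g, θ2g) : (ℝ × ℝ) × (ℝ × ℝ)) (τ m) →
        (((d j), ρ₀) : ((ℝ × ℝ) × (ℝ × ℝ)) × ℝ) ∈ Metric.ball Q ε₀ := fun m j hj =>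
      hQmem (d j) ρ₀ ((Metric.mem_ball.mp hj).le.trans (hτle m)) hρ₀
    have hgbd : ∀ m j x, gfun m j x ≤ 2 * M x := by
      intro m j x
      simp only [hgdef]
      split_ifs with hj
      · have h1 := hbd1 x _ (hball (hdjball m j hj))
        have h2 := hbd1 x _ (hball hq₀ball)
        calc |P x ((d j), ρ₀) - P x ((θ1g, θ2g), ρ₀)|
            ≤ |P x ((d j), ρ₀)| + |P x ((θ1g, θ2g), ρ₀)| := abs_sub _ _
          _ ≤ 2 * M x := by linarith
      · linarith [hM0 x]
    have hg0 : ∀ m j x, 0 ≤ gfun m j x := by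
      intro m j x
      simp only [hgdef]
      split_ifs
      · exact abs_nonneg _
      · exact le_rfl
    have hbdd : ∀ m x, BddAbove (Set.range fun j => gfun m j x) := fun m x =>
      ⟨2 * M x, by rintro _ ⟨j, rfl⟩; exact hgbd m j x⟩
    have hWle2M : ∀ m x, W m x ≤ 2 * M x := fun m x => ciSup_le fun j => hgbd m j x
    have hW0 : ∀ m x, 0 ≤ W m x := fun m x => le_trans (hg0 m 0 x) (le_ciSup (hbdd m x) 0)
    have hWmeas : ∀ m, Measurable (W m) := by
      intro m
      apply Measurable.iSup
      intro j
      simp only [hgdef]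
      by_cases hj : d j ∈ Metric.ball ((θ1g, θ2g) : (ℝ × ℝ) × (ℝ × ℝ)) (τ m)
      · simp only [if_pos hj]
        exact ((hPmeas _ (hdjball m j hj)).sub (hPmeas _ hq₀ball)).abs
      · simp only [if_neg hj]
        exact measurable_const
    have hWdom : ∀ m (x : ℝ × ℝ) (θp : (ℝ × ℝ) × (ℝ × ℝ)), dist θp (θ1g, θ2g) < τ m →
        |P x (θp, ρ₀) - P x ((θ1g, θ2g), ρ₀)| ≤ W m x := by
      intro m x θp hθp
      refine le_of_forall_pos_le_add fun ε' hε' => ?_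
      have hptball : ((θp, ρ₀) : ((ℝ × ℝ) × (ℝ × ℝ)) × ℝ) ∈ Metric.ball Q ε₀ :=
        hQmem θp ρ₀ (hθp.le.trans (hτle m)) hρ₀
      have hcA : ContinuousAt (fun q => P x q) (θp, ρ₀) :=
        (hPcont x).continuousAt (hU.mem_nhds (hball hptball))
      rw [Metric.continuousAt_iff] at hcA
      obtain ⟨r', hr'pos, hr'⟩ := hcA ε' hε'
      obtain ⟨j, hj1, hj2⟩ := hd.exists_mem_open (Metric.isOpen_ball.inter Metric.isOpen_ball)
        ⟨θp, Metric.mem_ball_self hr'pos, hθp⟩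
      have hdistj : dist ((((d j), ρ₀)) : ((ℝ × ℝ) × (ℝ × ℝ)) × ℝ) ((θp, ρ₀)) < r' := by
        rw [Prod.dist_eq]
        simp only [dist_self]
        exact max_lt hj1 hr'pos
      have h5 := hr' hdistj
      rw [Real.dist_eq] at h5
      have hgj : |P x ((d j), ρ₀) - P x ((θ1g, θ2g), ρ₀)| ≤ W m x := by
        have : gfun m j x = |P x ((d j), ρ₀) - P x ((θ1g, θ2g), ρ₀)| := by
          simp only [hgdef, if_pos hj2]
        rw [← this]
        exact le_ciSup (hbdd m x) j
      calc |P x (θp, ρ₀) - P x ((θ1g, θ2g), ρ₀)|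
          ≤ |P x (θp, ρ₀) - P x ((d j), ρ₀)| + |P x ((d j), ρ₀) - P x ((θ1g, θ2g), ρ₀)| :=
            abs_sub_le _ _ _
        _ ≤ ε' + W m x := add_le_add (by rw [abs_sub_comm]; exact h5.le) hgj
        _ = W m x + ε' := add_comm _ _
    have hWlim : ∀ x, Tendsto (fun m => W m x) atTop (𝓝 0) := by
      intro x
      rw [Metric.tendsto_atTop]
      intro ε' hε'
      have hcA : ContinuousAt (fun q => P x q) ((θ1g, θ2g), ρ₀) :=
        (hPcont x).continuousAt (hU.mem_nhds (hball hq₀ball))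
      rw [Metric.continuousAt_iff] at hcA
      obtain ⟨r', hr'pos, hr'⟩ := hcA (ε' / 2) (by linarith)
      obtain ⟨N, hN⟩ := exists_nat_one_div_lt (ε := r') hr'pos
      refine ⟨N, fun m hm => ?_⟩
      have hτm : τ m < r' := by
        have h1 : ((m : ℝ) + 1)⁻¹ ≤ ((N : ℝ) + 1)⁻¹ := by
          apply inv_anti₀ (by positivity)
          have : (N : ℝ) ≤ (m : ℝ) := Nat.cast_le.mpr hm
          linarith
        have h2 : ((N : ℝ) + 1)⁻¹ < r' := by
          rw [← one_div]
          exact hN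
        exact lt_of_le_of_lt (le_trans (min_le_left _ _) h1) h2
      have hWle : W m x ≤ ε' / 2 := by
        apply ciSup_le
        intro j
        simp only [hgdef]
        split_ifs with hj
        · have hdistj : dist ((((d j), ρ₀)) : ((ℝ × ℝ) × (ℝ × ℝ)) × ℝ)
              (((θ1g, θ2g), ρ₀)) < r' := by
            rw [Prod.dist_eq]
            simp only [dist_self]
            exact max_lt (lt_trans (Metric.mem_ball.mp hj) hτm) hr'pos
          have := hr' hdistj
          rw [Real.dist_eq] at this
          exact this.le
        · linarith
      rw [Real.dist_eq, sub_zero, abs_of_nonneg (hW0 m x)]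
      linarith
    have hEWlim : Tendsto (fun m => ∫ ω, W m (X 0 ω) ∂ℙ) atTop (𝓝 0) := by
      have h0 : (0 : ℝ) = ∫ _ : Ω, (0 : ℝ) ∂ℙ := by simp
      rw [h0]
      apply tendsto_integral_of_dominated_convergence (fun ω => 2 * M (X 0 ω))
      · exact fun m => ((hWmeas m).comp (hXmeas 0)).aestronglyMeasurable
      · exact hMint.const_mul 2
      · intro m
        exact Eventually.of_forall fun ω => by
          rw [Real.norm_eq_abs, abs_of_nonneg (hW0 _ _)]; exact hWle2M _ _
      · exact Eventually.of_forall fun ω => hWlim (X 0 ω)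
    obtain ⟨m, hm⟩ : ∃ m, ∫ ω, W m (X 0 ω) ∂ℙ < c / 4 :=
      (hEWlim.eventually_lt_const (by linarith : (0 : ℝ) < c / 4)).exists
    have hWint : Integrable (fun ω => W m (X 0 ω)) ℙ := by
      refine Integrable.mono' (hMint.const_mul 2)
        ((hWmeas m).comp (hXmeas 0)).aestronglyMeasurable ?_
      exact Eventually.of_forall fun ω => by
        rw [Real.norm_eq_abs, abs_of_nonneg (hW0 _ _)]; exact hWle2M _ _
    have hllnψ := dpd_aux_lln ℙ X hXmeas hXindep hXident _ hψm hψint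
    have hllnW := dpd_aux_lln ℙ X hXmeas hXindep hXident (W m) (hWmeas m) hWint
    -- the events
    set A1 : ℕ → Set Ω := fun n => {ω | dist (θ1hat n ω) θ1g < τ m} with hA1def
    set A2 : ℕ → Set Ω := fun n => {ω | dist (θ2hat n ω) θ2g < τ m} with hA2def
    set B : ℕ → Set Ω := fun n => {ω | |(n : ℝ)⁻¹ *
      ∑ i ∈ Finset.range n, P (X i ω) ((θ1g, θ2g), ρ₀) - deriv h ρ₀| < c / 2} with hBdef
    set C : ℕ → Set Ω := fun n => {ω | (n : ℝ)⁻¹ *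
      ∑ i ∈ Finset.range n, W m (X i ω) < c / 2} with hCdef
    have hmA1 : ∀ n, MeasurableSet (A1 n) := fun n =>
      measurableSet_lt ((hθhatmeas n).1.dist measurable_const) measurable_const
    have hmA2 : ∀ n, MeasurableSet (A2 n) := fun n =>
      measurableSet_lt ((hθhatmeas n).2.dist measurable_const) measurable_const
    have hmB : ∀ n, MeasurableSet (B n) := by
      intro n
      apply measurableSet_lt _ measurable_const
      exact (((Finset.measurable_sum _ fun i _ => hψm.comp (hXmeas i)).const_mul
        _).sub measurable_const).abs
    have hmC : ∀ n, MeasurableSet (C n) := by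
      intro n
      apply measurableSet_lt _ measurable_const
      exact (Finset.measurable_sum _ fun i _ => (hWmeas m).comp (hXmeas i)).const_mul _
    refine ⟨fun n => A1 n ∩ A2 n ∩ B n ∩ C n, ?_, ?_, ?_⟩
    · exact fun n => (((hmA1 n).inter (hmA2 n)).inter (hmB n)).inter (hmC n)
    · -- probability of the complement tends to 0
      have hc2 : (0 : ℝ) < c / 2 := by linarith
      have hhalf : (0 : ℝ) < τ m / 2 := by linarith [hτpos m]
      have hA1t : Tendsto (fun n => ℙ (A1 n)ᶜ) atTop (𝓝 0) := by
        refine tendsto_of_tendsto_of_tendsto_of_le_of_le tendsto_const_nhds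
          (hθ1hat (τ m / 2) hhalf) (fun n => zero_le) (fun n => measure_mono ?_)
        intro ω hω
        simp only [hA1def, mem_compl_iff, mem_setOf_eq, not_lt] at hω
        simp only [mem_setOf_eq]
        linarith
      have hA2t : Tendsto (fun n => ℙ (A2 n)ᶜ) atTop (𝓝 0) := by
        refine tendsto_of_tendsto_of_tendsto_of_le_of_le tendsto_const_nhds
          (hθ2hat (τ m / 2) hhalf) (fun n => zero_le) (fun n => measure_mono ?_)
        intro ω hω
        simp only [hA2def, mem_compl_iff, mem_setOf_eq, not_lt] at hω
        simp only [mem_setOf_eq]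
        linarith
      have hBt : Tendsto (fun n => ℙ (B n)ᶜ) atTop (𝓝 0) := by
        apply dpd_aux_prob_compl_tendsto_zero ℙ hmB
        filter_upwards [hllnψ] with ω hω
        rw [← hEψ] at hω
        filter_upwards [hω.eventually_mem (Metric.ball_mem_nhds _ hc2)] with n hn
        simp only [hBdef, mem_setOf_eq]
        rw [Metric.mem_ball, Real.dist_eq] at hn
        exact hn
      have hCt : Tendsto (fun n => ℙ (C n)ᶜ) atTop (𝓝 0) := by
        have hlt : ∫ ω, W m (X 0 ω) ∂ℙ < c / 2 := by linarith
        apply dpd_aux_prob_compl_tendsto_zero ℙ hmC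
        filter_upwards [hllnW] with ω hω
        filter_upwards [hω.eventually_mem (Iio_mem_nhds hlt)] with n hn
        exact hn
      have hsub : ∀ n, (A1 n ∩ A2 n ∩ B n ∩ C n)ᶜ ⊆
          ((A1 n)ᶜ ∪ (A2 n)ᶜ) ∪ ((B n)ᶜ ∪ (C n)ᶜ) := by
        intro n ω hω
        by_contra hcon
        simp only [mem_union, mem_compl_iff, not_or, not_not] at hcon
        exact hω ⟨⟨⟨hcon.1.1, hcon.1.2⟩, hcon.2.1⟩, hcon.2.2⟩
      have hbound : ∀ n, ℙ ((A1 n ∩ A2 n ∩ B n ∩ C n)ᶜ) ≤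
          (ℙ ((A1 n)ᶜ) + ℙ ((A2 n)ᶜ)) + (ℙ ((B n)ᶜ) + ℙ ((C n)ᶜ)) := fun n =>
        le_trans (measure_mono (hsub n)) (le_trans (measure_union_le _ _)
          (add_le_add (measure_union_le _ _) (measure_union_le _ _)))
      refine tendsto_of_tendsto_of_tendsto_of_le_of_le tendsto_const_nhds ?_
        (fun n => zero_le) hbound
      have := (hA1t.add hA2t).add (hBt.add hCt)
      simpa using this
    · -- the deterministic consequence on the good event
      intro n ω hω
      obtain ⟨⟨⟨hω1, hω2⟩, hωB⟩, hωC⟩ := hω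
      have hd1 : dist (θ1hat n ω) θ1g < ε₀ / 2 := lt_of_lt_of_le hω1 (hτle m)
      have hd2 : dist (θ2hat n ω) θ2g < ε₀ / 2 := lt_of_lt_of_le hω2 (hτle m)
      refine ⟨⟨hd1, hd2⟩, ?_⟩
      have hpair : dist ((θ1hat n ω, θ2hat n ω) : (ℝ × ℝ) × (ℝ × ℝ)) (θ1g, θ2g) < τ m := by
        rw [Prod.dist_eq]
        exact max_lt hω1 hω2
      have hpt : ∀ i, |P (X i ω) ((θ1hat n ω, θ2hat n ω), ρ₀)
          - P (X i ω) ((θ1g, θ2g), ρ₀)| ≤ W m (X i ω) :=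
        fun i => hWdom m (X i ω) _ hpair
      have hninv : (0 : ℝ) ≤ (n : ℝ)⁻¹ := by positivity
      have hdiff : |(n : ℝ)⁻¹ * ∑ i ∈ Finset.range n, P (X i ω) ((θ1hat n ω, θ2hat n ω), ρ₀)
          - (n : ℝ)⁻¹ * ∑ i ∈ Finset.range n, P (X i ω) ((θ1g, θ2g), ρ₀)|
          ≤ (n : ℝ)⁻¹ * ∑ i ∈ Finset.range n, W m (X i ω) := by
        rw [← mul_sub, ← Finset.sum_sub_distrib, abs_mul, abs_of_nonneg hninv]
        apply mul_le_mul_of_nonneg_left _ hninv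
        calc |∑ i ∈ Finset.range n, (P (X i ω) ((θ1hat n ω, θ2hat n ω), ρ₀)
              - P (X i ω) ((θ1g, θ2g), ρ₀))|
            ≤ ∑ i ∈ Finset.range n, |P (X i ω) ((θ1hat n ω, θ2hat n ω), ρ₀)
              - P (X i ω) ((θ1g, θ2g), ρ₀)| := Finset.abs_sum_le_sum_abs _ _
          _ ≤ ∑ i ∈ Finset.range n, W m (X i ω) := Finset.sum_le_sum fun i _ => hpt i
      have hωB' : |(n : ℝ)⁻¹ * ∑ i ∈ Finset.range n, P (X i ω) ((θ1g, θ2g), ρ₀)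
          - deriv h ρ₀| < c / 2 := hωB
      have hωC' : (n : ℝ)⁻¹ * ∑ i ∈ Finset.range n, W m (X i ω) < c / 2 := hωC
      calc |(n : ℝ)⁻¹ * ∑ i ∈ Finset.range n, P (X i ω) ((θ1hat n ω, θ2hat n ω), ρ₀)
            - deriv h ρ₀|
          ≤ |(n : ℝ)⁻¹ * ∑ i ∈ Finset.range n, P (X i ω) ((θ1hat n ω, θ2hat n ω), ρ₀)
            - (n : ℝ)⁻¹ * ∑ i ∈ Finset.range n, P (X i ω) ((θ1g, θ2g), ρ₀)|
            + |(n : ℝ)⁻¹ * ∑ i ∈ Finset.range n, P (X i ω) ((θ1g, θ2g), ρ₀)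
            - deriv h ρ₀| := abs_sub_le _ _ _
        _ < c := by linarith [hdiff, hωB', hωC']
  -- main root-existence statement at scale η
  have main : ∀ η : ℝ, 0 < η → ∃ Gd : ℕ → Set Ω, (∀ n, MeasurableSet (Gd n)) ∧
      Tendsto (fun n => ℙ (Gd n)ᶜ) atTop (𝓝 0) ∧
      ∀ n : ℕ, ∀ ω ∈ Gd n, ∃ ρs : ℝ, ρs ∈ Icc (-1 : ℝ) 1 ∧ |ρs - ρg| ≤ η ∧
        deriv (fun ρ' => dpdHn β f X n (θ1hat n ω) (θ2hat n ω) ρ' ω) ρs = 0 := by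
    intro η hη
    set δ' : ℝ := min δ η with hδ'def
    have hδ'pos : 0 < δ' := lt_min hδpos hη
    have hδ'δ : δ' ≤ δ := min_le_left _ _
    have hδ'η : δ' ≤ η := min_le_right _ _
    obtain ⟨hsm, hsp⟩ := hsign δ' hδ'pos hδ'δ
    set c : ℝ := min (deriv h (ρg + δ')) (-(deriv h (ρg - δ'))) with hcdef
    have hcpos : 0 < c := lt_min hsp (by linarith)
    have habs1 : |(ρg - δ') - ρg| ≤ ε₀ / 2 := by
      have : (ρg - δ') - ρg = -δ' := by ring
      rw [this, abs_neg, abs_of_pos hδ'pos]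
      linarith [hδε₀, hδ'δ]
    have habs2 : |(ρg + δ') - ρg| ≤ ε₀ / 2 := by
      have : (ρg + δ') - ρg = δ' := by ring
      rw [this, abs_of_pos hδ'pos]
      linarith [hδε₀, hδ'δ]
    obtain ⟨Em, hEmMeas, hEmT, hEmP⟩ := core (ρg - δ') habs1 c hcpos
    obtain ⟨Ep, hEpMeas, hEpT, hEpP⟩ := core (ρg + δ') habs2 c hcpos
    refine ⟨fun n => Em n ∩ Ep n, fun n => (hEmMeas n).inter (hEpMeas n), ?_, ?_⟩
    · have hsum2 : Tendsto (fun n => ℙ ((Em n)ᶜ) + ℙ ((Ep n)ᶜ)) atTop (𝓝 0) := by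
        have := hEmT.add hEpT
        simpa using this
      refine tendsto_of_tendsto_of_tendsto_of_le_of_le tendsto_const_nhds hsum2
        (fun n => zero_le) (fun n => ?_)
      calc ℙ ((Em n ∩ Ep n)ᶜ) = ℙ ((Em n)ᶜ ∪ (Ep n)ᶜ) := by rw [compl_inter]
        _ ≤ ℙ ((Em n)ᶜ) + ℙ ((Ep n)ᶜ) := measure_union_le _ _
    · intro n ω hω
      obtain ⟨hωm, hωp⟩ := hω
      obtain ⟨⟨hd1, hd2⟩, hGm⟩ := hEmP n ω hωm
      obtain ⟨_, hGp⟩ := hEpP n ω hωp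
      set θp : (ℝ × ℝ) × (ℝ × ℝ) := (θ1hat n ω, θ2hat n ω) with hθpdef
      have hθpd : dist θp (θ1g, θ2g) ≤ ε₀ / 2 := by
        rw [Prod.dist_eq]
        exact max_le hd1.le hd2.le
      have htube : ∀ ρ : ℝ, |ρ - ρg| ≤ δ →
          ((θp, ρ) : ((ℝ × ℝ) × (ℝ × ℝ)) × ℝ) ∈ Metric.ball Q ε₀ := fun ρ hρ =>
        hQmem θp ρ hθpd (le_trans hρ hδε₀)
      set G : ℝ → ℝ := fun ρ => (n : ℝ)⁻¹ * ∑ i ∈ Finset.range n, P (X i ω) (θp, ρ) with hGdef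
      have hGcont : ContinuousOn G (Icc (ρg - δ') (ρg + δ')) := by
        apply ContinuousOn.mul continuousOn_const
        apply continuousOn_finset_sum
        intro i _
        have hmapsTo : MapsTo (fun ρ : ℝ => ((θp, ρ) : ((ℝ × ℝ) × (ℝ × ℝ)) × ℝ))
            (Icc (ρg - δ') (ρg + δ')) U := by
          intro ρ hρ
          apply hball
          apply htube
          rw [abs_le]
          exact ⟨by linarith [hρ.1, hδ'δ], by linarith [hρ.2, hδ'δ]⟩
        exact (hPcont (X i ω)).comp
          ((continuous_const.prodMk continuous_id).continuousOn) hmapsTo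
      have hGm' : G (ρg - δ') < 0 := by
        have h1 : |G (ρg - δ') - deriv h (ρg - δ')| < c := hGm
        have h2 : c ≤ -(deriv h (ρg - δ')) := min_le_right _ _
        rw [abs_lt] at h1
        linarith [h1.2]
      have hGp' : 0 < G (ρg + δ') := by
        have h1 : |G (ρg + δ') - deriv h (ρg + δ')| < c := hGp
        have h2 : c ≤ deriv h (ρg + δ') := min_le_left _ _
        rw [abs_lt] at h1
        linarith [h1.1]
      have hIVT := intermediate_value_Icc (by linarith : ρg - δ' ≤ ρg + δ') hGcont
      obtain ⟨ρs, hρsmem, hρsval⟩ := hIVT ⟨hGm'.le, hGp'.le⟩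
      have hρsδ : |ρs - ρg| ≤ δ' := by
        rw [abs_le]
        exact ⟨by linarith [hρsmem.1], by linarith [hρsmem.2]⟩
      have hHD : HasDerivAt (fun ρ' => dpdHn β f X n (θ1hat n ω) (θ2hat n ω) ρ' ω)
          (G ρs) ρs := by
        have hsum : HasDerivAt (fun ρ' => ∑ i ∈ Finset.range n,
            dpdV β f (X i ω) (θ1hat n ω) (θ2hat n ω) ρ')
            (∑ i ∈ Finset.range n, P (X i ω) (θp, ρs)) ρs :=
          HasDerivAt.fun_sum fun i _ =>
            hL1 (X i ω) _ _ ρs (hball (htube ρs (le_trans hρsδ hδ'δ)))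
        have := hsum.const_mul ((n : ℝ)⁻¹)
        simp only [dpdHn, hGdef]
        exact this
      have hIoo := hδIoo ρs (le_trans hρsδ hδ'δ)
      exact ⟨ρs, ⟨hIoo.1.le, hIoo.2.le⟩, le_trans hρsδ hδ'η, by rw [hHD.deriv]; exact hρsval⟩
  -- construction of the estimator sequence
  have hpick : ∀ n : ℕ, ∀ ω : Ω, ∃ ρ : ℝ, ρ ∈ Icc (-1 : ℝ) 1 ∧
      ((∃ ρ', ρ' ∈ Icc (-1 : ℝ) 1 ∧
          deriv (fun ρ'' => dpdHn β f X n (θ1hat n ω) (θ2hat n ω) ρ'' ω) ρ' = 0) →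
        (deriv (fun ρ'' => dpdHn β f X n (θ1hat n ω) (θ2hat n ω) ρ'' ω) ρ = 0 ∧
         ∀ ρ', ρ' ∈ Icc (-1 : ℝ) 1 →
           deriv (fun ρ'' => dpdHn β f X n (θ1hat n ω) (θ2hat n ω) ρ'' ω) ρ' = 0 →
           |ρ - ρg| < |ρ' - ρg| + ((n : ℝ) + 1)⁻¹)) := by
    intro n ω
    by_cases hex : ∃ ρ', ρ' ∈ Icc (-1 : ℝ) 1 ∧
        deriv (fun ρ'' => dpdHn β f X n (θ1hat n ω) (θ2hat n ω) ρ'' ω) ρ' = 0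
    · set S : Set ℝ := (fun ρ => |ρ - ρg|) '' {ρ | ρ ∈ Icc (-1 : ℝ) 1 ∧
        deriv (fun ρ'' => dpdHn β f X n (θ1hat n ω) (θ2hat n ω) ρ'' ω) ρ = 0} with hSdef
      have hSne : S.Nonempty := by
        obtain ⟨ρ', h1, h2⟩ := hex
        exact ⟨|ρ' - ρg|, ⟨ρ', ⟨h1, h2⟩, rfl⟩⟩
      have hSbdd : BddBelow S := ⟨0, by rintro _ ⟨ρ', _, rfl⟩; exact abs_nonneg _⟩
      obtain ⟨a, haS, halt⟩ := Real.lt_sInf_add_pos hSne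
        (by positivity : (0 : ℝ) < ((n : ℝ) + 1)⁻¹)
      obtain ⟨ρ₀, ⟨hIcc0, hroot0⟩, rfl⟩ := haS
      refine ⟨ρ₀, hIcc0, fun _ => ⟨hroot0, fun ρ' h1 h2 => ?_⟩⟩
      have hle : sInf S ≤ |ρ' - ρg| := csInf_le hSbdd ⟨ρ', ⟨h1, h2⟩, rfl⟩
      linarith
    · exact ⟨ρg, ⟨hρg.1.le, hρg.2.le⟩, fun hcon => absurd hcon hex⟩
  choose ρhat hρhatIcc hρhatgood using hpick
  refine ⟨ρhat, hρhatIcc, ?_, ?_⟩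
  · -- the estimating equation holds at ρhat with probability tending to one
    obtain ⟨Gd, hGdMeas, hGdT, hGdP⟩ := main 1 one_pos
    have hsub : ∀ n, Gd n ⊆ {ω | deriv (fun ρ =>
        dpdHn β f X n (θ1hat n ω) (θ2hat n ω) ρ ω) (ρhat n ω) = 0} := by
      intro n ω hω
      obtain ⟨ρs, h1, _h2, h3⟩ := hGdP n ω hω
      exact (hρhatgood n ω ⟨ρs, h1, h3⟩).1
    have hGdTendsto1 : Tendsto (fun n => ℙ (Gd n)) atTop (𝓝 1) := by
      have heq : (fun n => ℙ (Gd n)) = fun n => 1 - ℙ ((Gd n)ᶜ) := by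
        funext n
        calc ℙ (Gd n) = ℙ (((Gd n)ᶜ)ᶜ) := by rw [compl_compl]
          _ = 1 - ℙ ((Gd n)ᶜ) := prob_compl_eq_one_sub (hGdMeas n).compl
      rw [heq]
      have hc : Tendsto (fun n => 1 - ℙ ((Gd n)ᶜ)) atTop (𝓝 (1 - 0)) :=
        ((ENNReal.continuous_sub_left ENNReal.one_ne_top).tendsto 0).comp hGdT
      simpa using hc
    exact tendsto_of_tendsto_of_tendsto_of_le_of_le hGdTendsto1 tendsto_const_nhds
      (fun n => measure_mono (hsub n)) (fun n => prob_le_one)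
  · -- consistency
    intro ε hε
    obtain ⟨Gd, hGdMeas, hGdT, hGdP⟩ := main (min (ε / 2) 1) (lt_min (by linarith) one_pos)
    have hevN : ∀ᶠ n : ℕ in atTop, ((n : ℝ) + 1)⁻¹ < ε / 2 := by
      have h1 : Tendsto (fun n : ℕ => ((n : ℝ) + 1)⁻¹) atTop (𝓝 0) := by
        have := tendsto_one_div_add_atTop_nhds_zero_nat (𝕜 := ℝ)
        simpa [one_div] using this
      exact h1.eventually_lt_const (by linarith)
    refine tendsto_of_tendsto_of_tendsto_of_le_of_le' tendsto_const_nhds hGdT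
      (Eventually.of_forall fun n => zero_le) ?_
    filter_upwards [hevN] with n hn
    apply measure_mono
    intro ω hω
    simp only [mem_setOf_eq] at hω
    simp only [mem_compl_iff]
    intro hGd
    obtain ⟨ρs, h1, h2, h3⟩ := hGdP n ω hGd
    have h4 := (hρhatgood n ω ⟨ρs, h1, h3⟩).2 ρs h1 h3
    have h5 : |ρhat n ω - ρg| < ε := by
      have h6 : min (ε / 2) 1 ≤ ε / 2 := min_le_left _ _
      linarith
    linarith
end

section
/- The influence function of the SMDPDE component variance functional under the normal model is bounded: for every β > 0, μ ∈ ℝ and σ² > 0, the function y ↦ φ(y; μ, σ²)^β · ((y − μ)² − σ²) is bounded on ℝ; consequently the influence function IF(θ_{j2}, y, g) = [φ(y;μ,σ²)^β((y−μ)² − σ²) − ∫ φ(x;μ,σ²)^{1+β}((x−μ)² − σ²) dx] / [(1/2) ∫ φ(x;μ,σ²)^{1+β}((x−μ)²/σ² − 1)² dx], which is an affine function of φ(y;μ,σ²)^β((y−μ)² − σ²), is a bounded function of y. -/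
open Real MeasureTheory

/-- The density of the `N(μ, σ²)` distribution (with `v = σ²`). -/
noncomputable def normalPDF (μ v x : ℝ) : ℝ :=
  (2 * π * v) ^ (-(1 : ℝ) / 2) * Real.exp (-(x - μ) ^ 2 / (2 * v))

private lemma exp_mul_le_one (x : ℝ) (hx : 0 ≤ x) : x * Real.exp (-x) ≤ 1 := by
  have h := Real.add_one_le_exp x
  have h2 := Real.exp_pos x
  rw [Real.exp_neg, mul_inv_le_iff₀ h2]
  linarith

/-- The influence function of the SMDPDE component variance functional under the normal model is
bounded: `y ↦ φ(y; μ, σ²)^β ((y − μ)² − σ²)` is bounded on `ℝ`, and consequently the influence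
function
`IF(θ_{j2}, y, g)
  = [φ(y)^β((y−μ)² − σ²) − ∫ φ(x)^{1+β}((x−μ)² − σ²) dx]
      / ((1/2) ∫ φ(x)^{1+β}((x−μ)²/σ² − 1)² dx)`,
an affine function of the former, is a bounded function of `y`. -/
theorem smdpde_variance_influence_function_bounded (β μ v : ℝ) (hβ : 0 < β) (hv : 0 < v) :
    (∃ C : ℝ, ∀ y : ℝ, |normalPDF μ v y ^ β * ((y - μ) ^ 2 - v)| ≤ C) ∧
    (∃ C : ℝ, ∀ y : ℝ,
      |(normalPDF μ v y ^ β * ((y - μ) ^ 2 - v)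
          - ∫ x : ℝ, normalPDF μ v x ^ (1 + β) * ((x - μ) ^ 2 - v))
        / ((1 / 2) * ∫ x : ℝ, normalPDF μ v x ^ (1 + β) * ((x - μ) ^ 2 / v - 1) ^ 2)| ≤ C) := by
  have hc : (0:ℝ) < (2 * π * v) ^ (-(1:ℝ)/2) :=
    Real.rpow_pos_of_pos (by positivity) _
  set c := (2 * π * v) ^ (-(1:ℝ)/2) with hcdef
  set a := β / (2 * v) with hadef
  have ha : 0 < a := by positivity
  set C := c ^ β * (1 / a + v) with hCdef
  have key : ∀ y : ℝ, |normalPDF μ v y ^ β * ((y - μ) ^ 2 - v)| ≤ C := by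
    intro y
    set t := (y - μ) ^ 2 with htdef
    have ht : 0 ≤ t := sq_nonneg _
    have hpdf : normalPDF μ v y ^ β = c ^ β * Real.exp (-(a * t)) := by
      unfold normalPDF
      rw [Real.mul_rpow hc.le (Real.exp_pos _).le,
        Real.rpow_def_of_pos (Real.exp_pos _), Real.log_exp]
      congr 1
      rw [hadef]
      field_simp
      rw [htdef]
      ring_nf
    have hexp := Real.exp_pos (-(a * t))
    have hcb : (0:ℝ) < c ^ β := Real.rpow_pos_of_pos hc _
    have h1 : |t - v| ≤ t + v := by
      rw [abs_le]; constructor <;> linarith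
    have h2 : Real.exp (-(a * t)) * t ≤ 1 / a := by
      rw [le_div_iff₀ ha]
      nlinarith [exp_mul_le_one (a * t) (mul_nonneg ha.le ht)]
    have h3 : Real.exp (-(a * t)) * v ≤ v := by
      have hle : Real.exp (-(a * t)) ≤ 1 :=
        Real.exp_le_one_iff.mpr (by nlinarith)
      nlinarith
    calc |normalPDF μ v y ^ β * (t - v)|
        = c ^ β * (Real.exp (-(a * t)) * |t - v|) := by
          rw [hpdf, abs_mul, abs_mul, abs_of_pos hcb, abs_of_pos hexp]; ring
      _ ≤ c ^ β * (Real.exp (-(a * t)) * (t + v)) := by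
          gcongr
      _ = c ^ β * (Real.exp (-(a*t)) * t + Real.exp (-(a*t)) * v) := by ring
      _ ≤ c ^ β * (1 / a + v) := by gcongr
  refine ⟨⟨C, key⟩, ?_⟩
  set I := ∫ x : ℝ, normalPDF μ v x ^ (1 + β) * ((x - μ) ^ 2 - v) with hI
  set D := (1 / 2) * ∫ x : ℝ, normalPDF μ v x ^ (1 + β) * ((x - μ) ^ 2 / v - 1) ^ 2 with hD
  refine ⟨(C + |I|) * |D|⁻¹, fun y => ?_⟩
  rw [div_eq_mul_inv, abs_mul, abs_inv]
  have h4 : |normalPDF μ v y ^ β * ((y - μ) ^ 2 - v) - I| ≤ C + |I| := by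
    calc |normalPDF μ v y ^ β * ((y - μ) ^ 2 - v) - I|
        ≤ |normalPDF μ v y ^ β * ((y - μ) ^ 2 - v)| + |I| := abs_sub _ _
      _ ≤ C + |I| := by have := key y; linarith
  exact mul_le_mul_of_nonneg_right h4 (by positivity)
end
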